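/- Let n ≥ 1, k ∈ ℤ, and x, x', y, y' ∈ ℝⁿ satisfy max{‖x − x'‖ⁿ, ‖y − y'‖ⁿ} ≤ 3^{−n}(2^{−k} + ‖x − y‖ⁿ). Then for all t_x, t_y ∈ [0,1], ‖x + t_x(x' − x) − y − t_y(y' − y)‖ⁿ ≥ 3^{−n}‖x − y‖ⁿ − 3^{−n}·2^{1−k}. -/
import Mathlib

lemma three_pow_jensen {a b c : ℝ} (ha : 0 ≤ a) (hb : 0 ≤ b) (hc : 0 ≤ c)
    {n : ℕ} (hn : 1 ≤ n) :
    (a + b + c) ^ n ≤ 3 ^ (n - 1) * (a ^ n + b ^ n + c ^ n) := by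
  obtain ⟨m, rfl⟩ := Nat.exists_eq_add_of_le hn
  have h := pow_sum_div_card_le_sum_pow (s := Finset.univ)
    (f := fun i : Fin 3 => ![a, b, c] i) (by
      intro i _
      fin_cases i <;> simpa using by assumption) m
  simp [Fin.sum_univ_three] at h
  rw [div_le_iff₀ (by positivity)] at h
  calc (a + b + c) ^ (1 + m) = (a + b + c) ^ (m + 1) := by ring_nf
    _ ≤ (a ^ (m + 1) + b ^ (m + 1) + c ^ (m + 1)) * 3 ^ m := h
    _ = 3 ^ (1 + m - 1) * (a ^ (1 + m) + b ^ (1 + m) + c ^ (1 + m)) := by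
        simp [Nat.add_sub_cancel_left]; ring_nf

theorem double_segment_lower_bound (n : ℕ) (hn : 1 ≤ n) (k : ℤ)
    (x x' y y' : EuclideanSpace ℝ (Fin n))
    (h : max (‖x - x'‖ ^ n) (‖y - y'‖ ^ n) ≤
      (3 : ℝ) ^ (-(n : ℤ)) * ((2 : ℝ) ^ (-k) + ‖x - y‖ ^ n)) :
    ∀ tx ∈ Set.Icc (0 : ℝ) 1, ∀ ty ∈ Set.Icc (0 : ℝ) 1,
      ‖x + tx • (x' - x) - y - ty • (y' - y)‖ ^ n ≥
        (3 : ℝ) ^ (-(n : ℤ)) * ‖x - y‖ ^ n - (3 : ℝ) ^ (-(n : ℤ)) * (2 : ℝ) ^ (1 - k) := by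
  intro tx htx ty hty
  set z := x + tx • (x' - x) - y - ty • (y' - y) with hz
  have h1 : ‖x - x'‖ ^ n ≤ (3 : ℝ) ^ (-(n : ℤ)) * ((2 : ℝ) ^ (-k) + ‖x - y‖ ^ n) :=
    le_trans (le_max_left _ _) h
  have h2 : ‖y - y'‖ ^ n ≤ (3 : ℝ) ^ (-(n : ℤ)) * ((2 : ℝ) ^ (-k) + ‖x - y‖ ^ n) :=
    le_trans (le_max_right _ _) h
  -- triangle inequality
  have htri : ‖x - y‖ ≤ ‖z‖ + ‖x - x'‖ + ‖y - y'‖ := by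
    have : x - y = z + (-(tx • (x' - x))) + (ty • (y' - y)) := by
      rw [hz]; abel
    calc ‖x - y‖ = ‖z + (-(tx • (x' - x))) + (ty • (y' - y))‖ := by rw [← this]
      _ ≤ ‖z + (-(tx • (x' - x)))‖ + ‖ty • (y' - y)‖ := norm_add_le _ _
      _ ≤ ‖z‖ + ‖-(tx • (x' - x))‖ + ‖ty • (y' - y)‖ := by
          gcongr; exact norm_add_le _ _
      _ ≤ ‖z‖ + ‖x - x'‖ + ‖y - y'‖ := by
          gcongr
          · rw [norm_neg, norm_smul, Real.norm_eq_abs, abs_of_nonneg htx.1, ← norm_neg]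
            have : -(x' - x) = x - x' := by abel
            rw [this]
            nlinarith [norm_nonneg (x - x'), htx.2]
          · rw [norm_smul, Real.norm_eq_abs, abs_of_nonneg hty.1, ← norm_neg]
            have : -(y' - y) = y - y' := by abel
            rw [this]
            nlinarith [norm_nonneg (y - y'), hty.2]
  have hpow : ‖x - y‖ ^ n ≤ (‖z‖ + ‖x - x'‖ + ‖y - y'‖) ^ n :=
    pow_le_pow_left₀ (norm_nonneg _) htri n
  have hjen := three_pow_jensen (norm_nonneg z) (norm_nonneg (x - x'))
    (norm_nonneg (y - y')) hn
  have h3 : (3 : ℝ) ^ (n - 1) * (3 : ℝ) ^ (-(n : ℤ)) = 1 / 3 := by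
    obtain ⟨m, rfl⟩ := Nat.exists_eq_add_of_le hn
    rw [show (1 : ℕ) + m - 1 = m from by omega]
    rw [show (-(((1:ℕ) + m : ℕ) : ℤ)) = -(m + 1) from by push_cast; ring]
    rw [zpow_neg, ← zpow_natCast (3:ℝ) m]
    rw [show ((m:ℤ) + 1) = (m:ℤ) + 1 from rfl, zpow_add₀ (by norm_num : (3:ℝ) ≠ 0)]
    field_simp
  have hpos : (0:ℝ) < (3 : ℝ) ^ (n - 1) := by positivity
  have h1' : (3:ℝ) ^ (n-1) * ‖x - x'‖ ^ n ≤ (1/3) * ((2:ℝ) ^ (-k) + ‖x - y‖ ^ n) := by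
    calc (3:ℝ) ^ (n-1) * ‖x - x'‖ ^ n
        ≤ (3:ℝ) ^ (n-1) * ((3 : ℝ) ^ (-(n : ℤ)) * ((2 : ℝ) ^ (-k) + ‖x - y‖ ^ n)) :=
          mul_le_mul_of_nonneg_left h1 hpos.le
      _ = (1/3) * ((2:ℝ) ^ (-k) + ‖x - y‖ ^ n) := by rw [← mul_assoc, h3]
  have h2' : (3:ℝ) ^ (n-1) * ‖y - y'‖ ^ n ≤ (1/3) * ((2:ℝ) ^ (-k) + ‖x - y‖ ^ n) := by
    calc (3:ℝ) ^ (n-1) * ‖y - y'‖ ^ n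
        ≤ (3:ℝ) ^ (n-1) * ((3 : ℝ) ^ (-(n : ℤ)) * ((2 : ℝ) ^ (-k) + ‖x - y‖ ^ n)) :=
          mul_le_mul_of_nonneg_left h2 hpos.le
      _ = (1/3) * ((2:ℝ) ^ (-k) + ‖x - y‖ ^ n) := by rw [← mul_assoc, h3]
  have key : ‖x - y‖ ^ n ≤ 3 ^ (n-1) * ‖z‖ ^ n + (2/3) * ((2:ℝ) ^ (-k) + ‖x - y‖ ^ n) := by
    have hh := hpow.trans hjen
    rw [mul_add, mul_add] at hh
    linarith
  have h2k : (2:ℝ) ^ (1 - k) = 2 * (2:ℝ) ^ (-k) := by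
    rw [show (1 - k) = (-k) + 1 from by ring, zpow_add₀ (by norm_num : (2:ℝ) ≠ 0)]
    ring
  have hzpos : (0:ℝ) < (3 : ℝ) ^ (-(n:ℤ)) := by positivity
  have key2 : (1/3) * ‖x - y‖ ^ n - (2/3) * (2:ℝ) ^ (-k) ≤ 3 ^ (n-1) * ‖z‖ ^ n := by
    linarith
  have h4 : (3:ℝ) ^ (-(n:ℤ)) * ((3:ℝ) ^ (n-1) * ‖z‖ ^ n) = (1/3) * ‖z‖ ^ n := by
    rw [← mul_assoc, mul_comm ((3:ℝ) ^ (-(n:ℤ))) _, h3]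
  have h5 := mul_le_mul_of_nonneg_left key2 hzpos.le
  rw [h4] at h5
  rw [ge_iff_le, h2k]
  nlinarith [h5]
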